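/- arXiv:0902.1868 — 5 statements merged into one kernel-verified Lean document; each statement's English description precedes it below -/
import Mathlib

section
/- Recursive polynomial construction: Let ℓ ≥ 0 and for 0 ≤ i ≤ ℓ let q_i be prime powers, d_i ≥ 1 integers, f_i > 1 reals with q_i ≥ f_i Δ d_i. Suppose φ_0 injects [N] into degree-≤d_0 polynomials over F_{q_0} (requiring q_0^{d_0+1} ≥ N) and for i ≥ 1, φ_i injects F_{q_{i-1}} into degree-≤d_i polynomials over F_{q_i} (requiring q_i^{d_i+1} ≥ q_{i-1}). For any one-hop view (x, Γ) with |Γ| ≤ Δ, the number of tuples (α_0,…,α_ℓ) ∈ F_{q_0}×···×F_{q_ℓ} such that for all i ∈ {0,…,ℓ}, the iterated values β_{i,x} and β_{i,y} differ for all y ∈ Γ (where β_{0,z} = φ_{0,z}(α_0) and β_{i,z} = φ_{i,β_{i-1,z}}(α_i)) is at least ∏_{i=0}^{ℓ} q_i·(1 - 1/f_i). -/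
/-!
Choose `α_0, …, α_ℓ` one at a time. Once the levels below `i` separate `x` from every `y ∈ Γ`,
the values `β_{i,z}` are the evaluations at `α_i` of the polynomials `φ_{0,z}` (for `i = 0`) or
`φ_{i-1, β_{i-1,z}}`, which are distinct for `z = x` and `z = y ∈ Γ` by injectivity and have
degree `≤ d_i`. So at most `|Γ| d_i ≤ Δ d_i ≤ q_i / f_i` values of `α_i` make `β_{i,x}` collide
with some `β_{i,y}`, and the number of good tuples is at least `∏ (q_i - Δ d_i)`.
-/
open scoped Classical

/-- The iterated values of the recursive polynomial construction:
`β_{0,z} = φ_{0,z}(α_0)` and `β_{i,z} = φ_{i,β_{i-1,z}}(α_i)`. -/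
def beta {ι : Type} (F : ℕ → Type) [∀ i, Field (F i)] (ℓ : ℕ)
    (φ0 : ι → Polynomial (F 0)) (φ : ∀ i : ℕ, F i → Polynomial (F (i + 1)))
    (a : ∀ i : Fin (ℓ + 1), F i) : (i : ℕ) → i ≤ ℓ → ι → F i
  | 0, _, z => (φ0 z).eval (a ⟨0, Nat.succ_pos ℓ⟩)
  | i + 1, h, z =>
      (φ i (beta F ℓ φ0 φ a i (Nat.le_of_succ_le h) z)).eval
        (a ⟨i + 1, Nat.succ_lt_succ h⟩)

open Finset Polynomial

theorem Fin.sum_card_filter_cons_le {n : ℕ} {F : Fin (n + 1) → Type*} [∀ i, Fintype (F i)]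
    (Q : (∀ i, F i) → Prop) [DecidablePred Q] (s : Finset (F 0)) :
    ∑ α ∈ s, #{a : ∀ k : Fin n, F k.succ | Q (Fin.cons α a)} ≤ #{a | Q a} := by
  rw [← card_sigma]
  refine card_le_card_of_injOn (fun p => Fin.cons p.1 p.2) ?_ ?_
  · intro p hp
    simp only [coe_sigma, Set.mem_sigma_iff, mem_coe, mem_filter, mem_univ, true_and] at hp ⊢
    exact hp.2
  · rintro ⟨α, a⟩ - ⟨β, b⟩ - h
    obtain ⟨rfl, rfl⟩ := Fin.cons_injective2 h
    rfl

theorem Fin.prod_card_sub_le_card_filter {m : ℕ} {F : Fin m → Type*} [∀ i, Fintype (F i)]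
    (P : Fin m → (∀ i, F i) → Prop) (b : Fin m → ℕ)
    (hP : ∀ i a a', (∀ j ≤ i, a j = a' j) → P i a → P i a')
    (hbad : ∀ i a, (∀ j < i, P j a) → #{α : F i | ¬ P i (Function.update a i α)} ≤ b i) :
    ∏ i, (Fintype.card (F i) - b i) ≤ #{a | ∀ i, P i a} := by
  induction m with
  | zero => simp
  | succ n ih =>
    rcases isEmpty_or_nonempty (∀ i, F i) with hempty | hne
    · obtain ⟨i, hi⟩ := isEmpty_pi.mp hempty
      exact (prod_eq_zero (mem_univ i) (by simp)).trans_le (Nat.zero_le _)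
    obtain ⟨a₀⟩ := hne
    set good₀ : Finset (F 0) := {α | P 0 (Function.update a₀ 0 α)}
    have hgood₀ : Fintype.card (F 0) - b 0 ≤ #good₀ := by
      have hsplit : #good₀ + #{α : F 0 | ¬ P 0 (Function.update a₀ 0 α)} =
          Fintype.card (F 0) := card_filter_add_card_filter_not _
      have hbad₀ := hbad 0 a₀ fun j hj => absurd hj (Fin.not_lt_zero j)
      omega
    have hcons₀ : ∀ α ∈ good₀, ∀ a, P 0 (Fin.cons α a) := by
      intro α hα a
      refine hP 0 _ _ (fun j hj => ?_) (mem_filter.mp hα).2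
      rw [Fin.le_zero_iff.mp hj]
      simp
    have htail : ∀ α ∈ good₀, ∏ k : Fin n, (Fintype.card (F k.succ) - b k.succ) ≤
        #{a : ∀ k : Fin n, F k.succ | ∀ i, P i (Fin.cons α a)} := by
      intro α hα
      have hsucc := ih (fun k a => P k.succ (Fin.cons α a)) (fun k => b k.succ)
        (fun k a a' h => hP k.succ _ _ fun j hj => by
          cases j using Fin.cases with
          | zero => rfl
          | succ j => exact h j (Fin.succ_le_succ_iff.mp hj))
        (fun k a h => by
          simp only [Fin.cons_update]
          refine hbad k.succ _ fun j hj => ?_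
          cases j using Fin.cases with
          | zero => exact hcons₀ α hα a
          | succ j => exact h j (Fin.succ_lt_succ_iff.mp hj))
      simpa only [Fin.forall_fin_succ, hcons₀ α hα, true_and] using hsucc
    calc ∏ i, (Fintype.card (F i) - b i)
        = (Fintype.card (F 0) - b 0) * ∏ k : Fin n, (Fintype.card (F k.succ) - b k.succ) :=
          Fin.prod_univ_succ _
      _ ≤ #good₀ * ∏ k : Fin n, (Fintype.card (F k.succ) - b k.succ) := by gcongr
      _ ≤ ∑ α ∈ good₀, #{a : ∀ k : Fin n, F k.succ | ∀ i, P i (Fin.cons α a)} :=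
          card_nsmul_le_sum good₀ _ _ htail
      _ ≤ #{a | ∀ i, P i a} := Fin.sum_card_filter_cons_le (fun a => ∀ i, P i a) good₀

theorem Polynomial.card_filter_eval_eq_le {R : Type*} [CommRing R] [IsDomain R] [Fintype R]
    {p q : R[X]} {d : ℕ} (hpq : p ≠ q) (hp : p.natDegree ≤ d) (hq : q.natDegree ≤ d) :
    #{α | p.eval α = q.eval α} ≤ d :=
  calc #{α | p.eval α = q.eval α}
      ≤ #(p - q).roots.toFinset := card_le_card fun α hα => by
        simpa [sub_ne_zero.mpr hpq, sub_eq_zero] using (mem_filter.mp hα).2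
    _ ≤ Multiset.card (p - q).roots := Multiset.toFinset_card_le _
    _ ≤ (p - q).natDegree := card_roots' _
    _ ≤ d := (natDegree_sub_le _ _).trans (max_le hp hq)

theorem Polynomial.card_filter_exists_eval_eq_le {ι R : Type*} [CommRing R] [IsDomain R]
    [Fintype R] (p : ι → R[X]) {d : ℕ} (hdeg : ∀ z, (p z).natDegree ≤ d) {x : ι}
    {Γ : Finset ι} (hne : ∀ y ∈ Γ, p x ≠ p y) :
    #{α | ∃ y ∈ Γ, (p x).eval α = (p y).eval α} ≤ #Γ * d :=
  calc #{α | ∃ y ∈ Γ, (p x).eval α = (p y).eval α}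
      ≤ #(Γ.biUnion fun y => {α | (p x).eval α = (p y).eval α}) :=
        card_le_card fun α hα => by simpa using hα
    _ ≤ ∑ y ∈ Γ, #{α | (p x).eval α = (p y).eval α} := card_biUnion_le
    _ ≤ #Γ * d := sum_le_card_nsmul _ _ _ fun y hy =>
        card_filter_eval_eq_le (hne y hy) (hdeg x) (hdeg y)

theorem mul_one_sub_one_div_le_cast_sub {q c : ℕ} {f : ℝ} (hf : 1 < f) (h : f * c ≤ q) :
    (q : ℝ) * (1 - 1 / f) ≤ ((q - c : ℕ) : ℝ) := by
  have hf₀ : 0 < f := one_pos.trans hf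
  have hcf : (c : ℝ) ≤ q / f := by
    rw [le_div_iff₀ hf₀, mul_comm]
    exact h
  have hcq : c ≤ q := by exact_mod_cast hcf.trans (div_le_self (Nat.cast_nonneg _) hf.le)
  rw [Nat.cast_sub hcq, mul_one_sub, mul_one_div]
  linarith

section RecursiveConstruction

variable {ι : Type} {F : ℕ → Type} [∀ i, Field (F i)] {ℓ : ℕ}
  {φ0 : ι → (F 0)[X]} {φ : ∀ i : ℕ, F i → (F (i + 1))[X]}

variable (F ℓ φ0 φ) in
def betaPoly (a : ∀ i : Fin (ℓ + 1), F i) : (i : ℕ) → i ≤ ℓ → ι → (F i)[X]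
  | 0, _, z => φ0 z
  | i + 1, h, z => φ i (beta F ℓ φ0 φ a i (Nat.le_of_succ_le h) z)

theorem beta_eq_eval_betaPoly (a : ∀ i : Fin (ℓ + 1), F i) (i : ℕ) (h : i ≤ ℓ) (z : ι) :
    beta F ℓ φ0 φ a i h z = (betaPoly F ℓ φ0 φ a i h z).eval (a ⟨i, Nat.lt_succ_of_le h⟩) := by
  cases i <;> rfl

theorem beta_congr {a a' : ∀ i : Fin (ℓ + 1), F i} :
    ∀ (i : ℕ) (h : i ≤ ℓ), (∀ j : Fin (ℓ + 1), (j : ℕ) ≤ i → a j = a' j) →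
      ∀ z, beta F ℓ φ0 φ a i h z = beta F ℓ φ0 φ a' i h z
  | 0, _, haa', _ => by
    simp only [beta, haa' ⟨0, Nat.succ_pos ℓ⟩ le_rfl]
  | i + 1, h, haa', z => by
    simp only [beta, beta_congr i _ (fun j hj => haa' j (Nat.le_succ_of_le hj)) z,
      haa' ⟨i + 1, Nat.succ_lt_succ h⟩ le_rfl]

theorem betaPoly_congr {a a' : ∀ i : Fin (ℓ + 1), F i} (i : ℕ) (h : i ≤ ℓ)
    (haa' : ∀ j : Fin (ℓ + 1), (j : ℕ) < i → a j = a' j) (z : ι) :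
    betaPoly F ℓ φ0 φ a i h z = betaPoly F ℓ φ0 φ a' i h z := by
  cases i with
  | zero => rfl
  | succ i => simp only [betaPoly, beta_congr i _ (fun j hj => haa' j (Nat.lt_succ_of_le hj)) z]

theorem beta_update_self (a : ∀ i : Fin (ℓ + 1), F i) (i : Fin (ℓ + 1)) (α : F i) (z : ι) :
    beta F ℓ φ0 φ (Function.update a i α) i i.is_le z =
      (betaPoly F ℓ φ0 φ a i i.is_le z).eval α := by
  rw [beta_eq_eval_betaPoly, betaPoly_congr _ _
    (fun j hj => Function.update_of_ne (Fin.ne_of_lt hj) _ _)]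
  simp

theorem betaPoly_ne (hφ0 : Function.Injective φ0) (hφ : ∀ i, Function.Injective (φ i))
    {a : ∀ i : Fin (ℓ + 1), F i} {i : ℕ} (h : i ≤ ℓ) {x y : ι} (hxy : x ≠ y)
    (hprev : ∀ j (hj : j < i), beta F ℓ φ0 φ a j (hj.le.trans h) x ≠
      beta F ℓ φ0 φ a j (hj.le.trans h) y) :
    betaPoly F ℓ φ0 φ a i h x ≠ betaPoly F ℓ φ0 φ a i h y := by
  cases i with
  | zero => exact hφ0.ne hxy
  | succ i => exact (hφ i).ne (hprev i (Nat.lt_succ_self i))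

theorem natDegree_betaPoly_le {d : ℕ → ℕ} (hdeg0 : ∀ z, (φ0 z).natDegree ≤ d 0)
    (hdeg : ∀ i b, (φ i b).natDegree ≤ d (i + 1)) (a : ∀ i : Fin (ℓ + 1), F i) (i : ℕ)
    (h : i ≤ ℓ) (z : ι) : (betaPoly F ℓ φ0 φ a i h z).natDegree ≤ d i := by
  cases i with
  | zero => exact hdeg0 z
  | succ i => exact hdeg i _

theorem card_filter_exists_beta_update_eq_le [∀ i, Fintype (F i)] {d : ℕ → ℕ}
    (hφ0 : Function.Injective φ0) (hφ : ∀ i, Function.Injective (φ i))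
    (hdeg0 : ∀ z, (φ0 z).natDegree ≤ d 0) (hdeg : ∀ i b, (φ i b).natDegree ≤ d (i + 1))
    {x : ι} {Γ : Finset ι} (hx : x ∉ Γ)
    (a : ∀ i : Fin (ℓ + 1), F i) (i : Fin (ℓ + 1))
    (hprev : ∀ j < i, ∀ y ∈ Γ, beta F ℓ φ0 φ a j j.is_le x ≠ beta F ℓ φ0 φ a j j.is_le y) :
    #{α : F i | ∃ y ∈ Γ, beta F ℓ φ0 φ (Function.update a i α) i i.is_le x =
      beta F ℓ φ0 φ (Function.update a i α) i i.is_le y} ≤ #Γ * d i := by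
  have hne (y) (hy : y ∈ Γ) :
      betaPoly F ℓ φ0 φ a i i.is_le x ≠ betaPoly F ℓ φ0 φ a i i.is_le y :=
    betaPoly_ne hφ0 hφ _ (ne_of_mem_of_not_mem hy hx).symm
      fun j hj => hprev ⟨j, by omega⟩ hj y hy
  simpa only [beta_update_self] using
    card_filter_exists_eval_eq_le _ (natDegree_betaPoly_le hdeg0 hdeg a i _) hne

end RecursiveConstruction

theorem stmt_6_general (N Δ ℓ : ℕ) (F : ℕ → Type) [∀ i, Field (F i)]
    [∀ i, Fintype (F i)] [∀ i, DecidableEq (F i)]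
    (d : ℕ → ℕ) (f : ℕ → ℝ)
    (hf : ∀ i ≤ ℓ, 1 < f i)
    (hq : ∀ i ≤ ℓ, f i * (Δ : ℝ) * (d i : ℝ) ≤ (Fintype.card (F i) : ℝ))
    (φ0 : Fin N → Polynomial (F 0))
    (φ : ∀ i : ℕ, F i → Polynomial (F (i + 1)))
    (hφ0 : Function.Injective φ0) (hφ : ∀ i, Function.Injective (φ i))
    (hdeg0 : ∀ z, (φ0 z).natDegree ≤ d 0)
    (hdeg : ∀ i b, (φ i b).natDegree ≤ d (i + 1))
    (x : Fin N) (Γ : Finset (Fin N)) (hx : x ∉ Γ) (hΓ : Γ.card ≤ Δ) :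
    ∏ i ∈ Finset.range (ℓ + 1), (Fintype.card (F i) : ℝ) * (1 - 1 / f i) ≤
      ((Finset.univ.filter
          (fun a : ∀ i : Fin (ℓ + 1), F i =>
            ∀ (i : ℕ) (h : i ≤ ℓ), ∀ y ∈ Γ,
              beta F ℓ φ0 φ a i h x ≠ beta F ℓ φ0 φ a i h y)).card : ℝ) := by
  have hcount := Fin.prod_card_sub_le_card_filter (F := fun i : Fin (ℓ + 1) => F i)
    (fun i a => ∀ y ∈ Γ, beta F ℓ φ0 φ a i i.is_le x ≠ beta F ℓ φ0 φ a i i.is_le y)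
    (fun i => Δ * d i)
    (fun i a a' haa' => by simpa only [beta_congr _ _ haa'] using id)
    (fun i a hprev => (card_le_card fun α hα => by simpa using hα).trans <|
      (card_filter_exists_beta_update_eq_le hφ0 hφ hdeg0 hdeg hx a i hprev).trans
        (Nat.mul_le_mul_right _ hΓ))
  rw [Fin.prod_univ_eq_prod_range (fun i => Fintype.card (F i) - Δ * d i)] at hcount
  calc ∏ i ∈ range (ℓ + 1), (Fintype.card (F i) : ℝ) * (1 - 1 / f i)
      ≤ ∏ i ∈ range (ℓ + 1), ((Fintype.card (F i) - Δ * d i : ℕ) : ℝ) := by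
        refine prod_le_prod (fun i hi => ?_) (fun i hi => ?_)
        all_goals have hi := Nat.lt_succ_iff.mp (mem_range.mp hi)
        · have hf₀ : 0 < f i := one_pos.trans (hf i hi)
          exact mul_nonneg (Nat.cast_nonneg _)
            (sub_nonneg.mpr ((div_le_one hf₀).mpr (hf i hi).le))
        · exact mul_one_sub_one_div_le_cast_sub (hf i hi) (by push_cast; linarith [hq i hi])
    _ ≤ #{a : ∀ i : Fin (ℓ + 1), F i | ∀ i : Fin (ℓ + 1), ∀ y ∈ Γ,
          beta F ℓ φ0 φ a i i.is_le x ≠ beta F ℓ φ0 φ a i i.is_le y} := by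
        exact_mod_cast hcount
    _ = _ := by
      congr 2
      ext a
      simp only [mem_filter, mem_univ, true_and, Fin.forall_iff, Nat.lt_succ_iff]

/-- Counting core of the recursive polynomial construction: with `q_i ≥ f_iΔd_i`
(`f_i > 1`), `φ_0 : [N] ↪` degree-`≤d_0` polynomials over `F_{q_0}`
(`q_0^{d_0+1} ≥ N`), and `φ_i : F_{q_{i-1}} ↪` degree-`≤d_i` polynomials over
`F_{q_i}` (`q_i^{d_i+1} ≥ q_{i-1}`), for every one-hop view `(x, Γ)` with
`|Γ| ≤ Δ` the number of tuples `(α_0,…,α_ℓ)` such that `β_{i,x} ≠ β_{i,y}` for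
all `0 ≤ i ≤ ℓ` and all `y ∈ Γ` is at least `∏_{i=0}^{ℓ} q_i(1 - 1/f_i)`. -/
theorem stmt_6 (N Δ ℓ : ℕ) (F : ℕ → Type) [∀ i, Field (F i)]
    [∀ i, Fintype (F i)] [∀ i, DecidableEq (F i)]
    (d : ℕ → ℕ) (f : ℕ → ℝ)
    (hd : ∀ i ≤ ℓ, 1 ≤ d i) (hf : ∀ i ≤ ℓ, 1 < f i)
    (hq : ∀ i ≤ ℓ, f i * (Δ : ℝ) * (d i : ℝ) ≤ (Fintype.card (F i) : ℝ))
    (φ0 : Fin N → Polynomial (F 0))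
    (φ : ∀ i : ℕ, F i → Polynomial (F (i + 1)))
    (hφ0 : Function.Injective φ0) (hφ : ∀ i, Function.Injective (φ i))
    (hdeg0 : ∀ z, (φ0 z).natDegree ≤ d 0)
    (hdeg : ∀ i b, (φ i b).natDegree ≤ d (i + 1))
    (hN0 : N ≤ Fintype.card (F 0) ^ (d 0 + 1))
    (hNi : ∀ i, Fintype.card (F i) ≤ Fintype.card (F (i + 1)) ^ (d (i + 1) + 1))
    (x : Fin N) (Γ : Finset (Fin N)) (hx : x ∉ Γ) (hΓ : Γ.card ≤ Δ) :
    ∏ i ∈ Finset.range (ℓ + 1), (Fintype.card (F i) : ℝ) * (1 - 1 / f i) ≤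
      ((Finset.univ.filter
          (fun a : ∀ i : Fin (ℓ + 1), F i =>
            ∀ (i : ℕ) (h : i ≤ ℓ), ∀ y ∈ Γ,
              beta F ℓ φ0 φ a i h x ≠ beta F ℓ φ0 φ a i h y)).card : ℝ) :=
  stmt_6_general N Δ ℓ F d f hf hq φ0 φ hφ0 hφ hdeg0 hdeg x Γ hx hΓ
end

section
/- The multicoloring defined by the recursive polynomial construction is valid: if two adjacent one-hop views (x, Γ_u) and (y, Γ_v) satisfy x ∈ Γ_v and y ∈ Γ_u with x ≠ y, then their assigned color sets (subsets of F_{q_0}×···×F_{q_ℓ}×F_{q_ℓ}, where (α_0,…,α_ℓ, β_{ℓ,x}) is selected iff β_{ℓ,x} ≠ β_{ℓ,y'} for all y' ∈ Γ) are disjoint. -/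
theorem stmt_7_general (N ℓ : ℕ) (F : ℕ → Type) [∀ i, Field (F i)]
    (φ0 : Fin N → Polynomial (F 0))
    (φ : ∀ i : ℕ, F i → Polynomial (F (i + 1)))
    (x y : Fin N) (Γu Γv : Finset (Fin N))
    (hyu : y ∈ Γu) :
    Disjoint
      {c : (∀ i : Fin (ℓ + 1), F i) × F ℓ |
        c.2 = beta F ℓ φ0 φ c.1 ℓ le_rfl x ∧
        ∀ y' ∈ Γu,
          beta F ℓ φ0 φ c.1 ℓ le_rfl x ≠ beta F ℓ φ0 φ c.1 ℓ le_rfl y'}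
      {c : (∀ i : Fin (ℓ + 1), F i) × F ℓ |
        c.2 = beta F ℓ φ0 φ c.1 ℓ le_rfl y ∧
        ∀ x' ∈ Γv,
          beta F ℓ φ0 φ c.1 ℓ le_rfl y ≠ beta F ℓ φ0 φ c.1 ℓ le_rfl x'} := by
  rw [Set.disjoint_left]
  rintro c ⟨hc_x, hx_separated⟩ ⟨hc_y, -⟩
  exact hx_separated y hyu (hc_x.symm.trans hc_y)

/-- Validity of the multicoloring from the recursive polynomial construction:
the color set of view `(x, Γ)` consists of all `(α, β_{ℓ,x})` with
`β_{ℓ,x} ≠ β_{ℓ,y'}` for all `y' ∈ Γ`.  For adjacent views `(x, Γu)` and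
`(y, Γv)` (i.e. `x ≠ y`, `x ∈ Γv`, `y ∈ Γu`) the color sets are disjoint. -/
theorem stmt_7 (N ℓ : ℕ) (F : ℕ → Type) [∀ i, Field (F i)]
    (φ0 : Fin N → Polynomial (F 0))
    (φ : ∀ i : ℕ, F i → Polynomial (F (i + 1)))
    (x y : Fin N) (Γu Γv : Finset (Fin N))
    (hxy : x ≠ y) (hxv : x ∈ Γv) (hyu : y ∈ Γu)
    (hxu : x ∉ Γu) (hyv : y ∉ Γv) :
    Disjoint
      {c : (∀ i : Fin (ℓ + 1), F i) × F ℓ |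
        c.2 = beta F ℓ φ0 φ c.1 ℓ le_rfl x ∧
        ∀ y' ∈ Γu,
          beta F ℓ φ0 φ c.1 ℓ le_rfl x ≠ beta F ℓ φ0 φ c.1 ℓ le_rfl y'}
      {c : (∀ i : Fin (ℓ + 1), F i) × F ℓ |
        c.2 = beta F ℓ φ0 φ c.1 ℓ le_rfl y ∧
        ∀ x' ∈ Γv,
          beta F ℓ φ0 φ c.1 ℓ le_rfl y ≠ beta F ℓ φ0 φ c.1 ℓ le_rfl x'} :=
  stmt_7_general N ℓ F φ0 φ x y Γu Γv hyu
end

section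
/- No one-shot multicoloring algorithm has approximation ratio exceeding 1: for any one-shot algorithm (a function from one-hop views to color subsets of [k] such that adjacent one-hop views receive disjoint sets), there is no δ and no assignment giving every one-hop view with |Γ| = δ more than k/(δ+1) colors. Concretely, if f assigns to each one-hop view (x, Γ) with |Γ| = δ a set f(x,Γ) ⊆ [k], and f(x,Γ_x) ∩ f(y,Γ_y) = ∅ whenever the views satisfy the adjacency condition, then considering a clique on δ+1 IDs, the sum of the sizes of the δ+1 assigned color sets is at most k, so some view gets at most k/(δ+1) colors. -/
/-!
On a clique `K` the view of `x` is `(x, K \ {x})`, and any two of these views are adjacent, so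
the algorithm must give them pairwise disjoint colour sets inside `[k]`. Their sizes therefore
sum to at most `k`, and by averaging over the `|K| = δ + 1` views one of them gets at most
`k / (δ + 1)` colours.
-/

open Finset

theorem Finset.sum_card_le_card_of_pairwiseDisjoint {ι β : Type*} [Fintype β] {s : Finset ι}
    {t : ι → Finset β} (h : (s : Set ι).PairwiseDisjoint t) :
    ∑ i ∈ s, #(t i) ≤ Fintype.card β := by
  classical
  rw [← card_biUnion h]
  exact card_le_univ _

theorem Finset.exists_le_div_card_of_sum_le {ι : Type*} {s : Finset ι} (hs : s.Nonempty)
    {a : ι → ℝ} {c : ℝ} (h : ∑ i ∈ s, a i ≤ c) : ∃ i ∈ s, a i ≤ c / #s := by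
  refine exists_le_of_sum_le hs ?_
  have hcard : (#s : ℝ) ≠ 0 := by exact_mod_cast hs.card_pos.ne'
  rwa [sum_const, nsmul_eq_mul, mul_div_cancel₀ _ hcard]

theorem pairwiseDisjoint_cliqueViews {α β : Type*} [DecidableEq α]
    {f : α → Finset α → Finset β}
    (hdisj : ∀ (x y : α) (Γx Γy : Finset α),
      x ≠ y → x ∈ Γy → x ∉ Γx → y ∈ Γx → y ∉ Γy → Disjoint (f x Γx) (f y Γy))
    (K : Finset α) : (K : Set α).PairwiseDisjoint fun x => f x (K.erase x) :=
  fun x hx y hy hxy => hdisj x y _ _ hxy (mem_erase.2 ⟨hxy, hx⟩) (notMem_erase x K)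
    (mem_erase.2 ⟨hxy.symm, hy⟩) (notMem_erase y K)

/-- No one-shot multicoloring algorithm has approximation ratio exceeding 1:
if `f` assigns color sets to one-hop views with adjacent views (satisfying
`x ≠ y`, `x ∈ Γ_y \ Γ_x`, `y ∈ Γ_x \ Γ_y`) receiving disjoint sets, then on a
clique of `δ+1` IDs the sizes of the assigned sets sum to at most `k`, so some
view gets at most `k/(δ+1)` colors. -/
theorem stmt_9 (N k δ : ℕ) (f : Fin N → Finset (Fin N) → Finset (Fin k))
    (hdisj : ∀ (x y : Fin N) (Γx Γy : Finset (Fin N)),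
      x ≠ y → x ∈ Γy → x ∉ Γx → y ∈ Γx → y ∉ Γy →
        Disjoint (f x Γx) (f y Γy))
    (K : Finset (Fin N)) (hK : K.card = δ + 1) :
    (∑ x ∈ K, (f x (K.erase x)).card ≤ k) ∧
    ∃ x ∈ K, ((f x (K.erase x)).card : ℝ) ≤ (k : ℝ) / ((δ : ℝ) + 1) := by
  have hsum : ∑ x ∈ K, #(f x (K.erase x)) ≤ k := by
    simpa using sum_card_le_card_of_pairwiseDisjoint (pairwiseDisjoint_cliqueViews hdisj K)
  have hK' : K.Nonempty := card_pos.1 (hK ▸ δ.succ_pos)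
  refine ⟨hsum, ?_⟩
  have hsumℝ : ∑ x ∈ K, (#(f x (K.erase x)) : ℝ) ≤ k := by exact_mod_cast hsum
  simpa [hK] using exists_le_div_card_of_sum_le hK' hsumℝ
end

section
/- Every deterministic one-shot c-coloring algorithm for graphs with maximum degree Δ and IDs in [N] yields c antisymmetric relations ≺_1,…,≺_c on [N] such that for every one-hop view (x, Γ) with |Γ| ≤ Δ there exists i ∈ [c] with x ≺_i y for all y ∈ Γ. Conversely, if for candidate relations there exists a one-hop view (x, Γ), |Γ| ≤ Δ, such that for all i ∈ [c] the set Γ ∩ B_i(x) is nonempty (B_i(x) = {y : ¬(x ≺_i y)}), then those relations do not give a valid c-coloring algorithm. -/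
/-!
A view `(x, Γ)` coloured `α` certifies `x ≺_α y` for every `y ∈ Γ`. Two certificates
`x ≺_α y` and `y ≺_α x` would be two adjacent views with the same colour, so each `≺_α` is
antisymmetric, and the colour of `(x, Γ)` itself is a relation under which `x` precedes all of
`Γ`. The converse direction is pure logic: a view at which every relation fails cannot be
covered.
-/

section OneShotColoring

variable {V C : Type*}

def IsOneShotColoring (A : V → Finset V → C) (Δ : ℕ) : Prop :=
  ∀ (x y : V) (Γx Γy : Finset V),
    x ≠ y → x ∈ Γy → x ∉ Γx → y ∈ Γx → y ∉ Γy →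
      Γx.card ≤ Δ → Γy.card ≤ Δ → A x Γx ≠ A y Γy

/-- `OneShotPrecedes A Δ α x y` is `x ≺_α y`: some view `(x, Γ)` with `y ∈ Γ` is coloured `α`. -/
def OneShotPrecedes (A : V → Finset V → C) (Δ : ℕ) (α : C) (x y : V) : Prop :=
  x ≠ y ∧ ∃ Γ : Finset V, x ∉ Γ ∧ y ∈ Γ ∧ Γ.card ≤ Δ ∧ A x Γ = α

variable {A : V → Finset V → C} {Δ : ℕ}

theorem OneShotPrecedes.not_symm (hA : IsOneShotColoring A Δ) {α : C} {x y : V}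
    (hxy : OneShotPrecedes A Δ α x y) : ¬ OneShotPrecedes A Δ α y x := by
  obtain ⟨hne, Γx, hxΓx, hyΓx, hcardx, hAx⟩ := hxy
  rintro ⟨-, Γy, hyΓy, hxΓy, hcardy, hAy⟩
  exact hA x y Γx Γy hne hxΓy hxΓx hyΓx hyΓy hcardx hcardy (hAx.trans hAy.symm)

theorem oneShotPrecedes_of_mem {x : V} {Γ : Finset V} (hx : x ∉ Γ) (hcard : Γ.card ≤ Δ)
    {y : V} (hy : y ∈ Γ) : OneShotPrecedes A Δ (A x Γ) x y :=
  ⟨fun h => hx (h ▸ hy), Γ, hx, hy, hcard, rfl⟩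

end OneShotColoring

theorem stmt_14_general (N Δ c : ℕ)
    (A : Fin N → Finset (Fin N) → Fin c)
    (hA : ∀ (x y : Fin N) (Γx Γy : Finset (Fin N)),
      x ≠ y → x ∈ Γy → x ∉ Γx → y ∈ Γx → y ∉ Γy →
        Γx.card ≤ Δ → Γy.card ≤ Δ → A x Γx ≠ A y Γy) :
    (∃ r : Fin c → Fin N → Fin N → Prop,
      (∀ α x y, ¬ r α x y ∨ ¬ r α y x) ∧
      (∀ (x : Fin N) (Γ : Finset (Fin N)), x ∉ Γ → Γ.card ≤ Δ →
        ∃ i, ∀ y ∈ Γ, r i x y)) ∧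
    (∀ r : Fin c → Fin N → Fin N → Prop,
      (∃ (x : Fin N) (Γ : Finset (Fin N)), x ∉ Γ ∧ Γ.card ≤ Δ ∧
        ∀ i, ∃ y ∈ Γ, ¬ r i x y) →
      ¬ ∀ (x : Fin N) (Γ : Finset (Fin N)), x ∉ Γ → Γ.card ≤ Δ →
          ∃ i, ∀ y ∈ Γ, r i x y) := by
  refine ⟨⟨OneShotPrecedes A Δ, ?_, ?_⟩, ?_⟩
  · exact fun α x y => not_or_of_imp (OneShotPrecedes.not_symm hA)
  · exact fun x Γ hx hcard => ⟨A x Γ, fun y hy => oneShotPrecedes_of_mem hx hcard hy⟩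
  · rintro r ⟨x, Γ, hx, hcard, hblocked⟩ hcovered
    obtain ⟨i, hi⟩ := hcovered x Γ hx hcard
    obtain ⟨y, hy, hnot⟩ := hblocked i
    exact hnot (hi y hy)

/-- Every deterministic one-shot `c`-coloring algorithm `A` for graphs with
maximum degree `Δ` and IDs in `[N]` yields `c` antisymmetric relations
`≺_1, …, ≺_c` on `[N]` such that every one-hop view `(x, Γ)` with `|Γ| ≤ Δ`
has some `i` with `x ≺_i y` for all `y ∈ Γ`.  Conversely, if for candidate
relations there is a one-hop view `(x, Γ)`, `|Γ| ≤ Δ`, such that for all `i`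
the set `Γ ∩ B_i(x)` is nonempty, then those relations do not give a valid
`c`-coloring algorithm. -/
theorem stmt_14 (N Δ c : ℕ) (hΔ : 1 ≤ Δ) (hN : 2 ≤ N)
    (A : Fin N → Finset (Fin N) → Fin c)
    (hA : ∀ (x y : Fin N) (Γx Γy : Finset (Fin N)),
      x ≠ y → x ∈ Γy → x ∉ Γx → y ∈ Γx → y ∉ Γy →
        Γx.card ≤ Δ → Γy.card ≤ Δ → A x Γx ≠ A y Γy) :
    (∃ r : Fin c → Fin N → Fin N → Prop,
      (∀ α x y, ¬ r α x y ∨ ¬ r α y x) ∧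
      (∀ (x : Fin N) (Γ : Finset (Fin N)), x ∉ Γ → Γ.card ≤ Δ →
        ∃ i, ∀ y ∈ Γ, r i x y)) ∧
    (∀ r : Fin c → Fin N → Fin N → Prop,
      (∃ (x : Fin N) (Γ : Finset (Fin N)), x ∉ Γ ∧ Γ.card ≤ Δ ∧
        ∀ i, ∃ y ∈ Γ, ¬ r i x y) →
      ¬ ∀ (x : Fin N) (Γ : Finset (Fin N)), x ∉ Γ → Γ.card ≤ Δ →
          ∃ i, ∀ y ∈ Γ, r i x y) :=
  stmt_14_general N Δ c A hA
end

section
/- For the neighborhood graph N_1(N, Δ) whose vertices are the one-hop views (x, Γ) with x ∈ [N], Γ ⊆ [N]\{x}, 1 ≤ |Γ| ≤ Δ, with edges between views satisfying the adjacency condition (x ≠ y, x ∈ Γ' \ Γ, y ∈ Γ \ Γ'): a function from one-hop views to colors is a valid deterministic one-shot coloring algorithm for all graphs of maximum degree Δ with IDs in [N] if and only if it is a proper coloring of N_1(N, Δ). In particular, the minimum number of colors of any deterministic one-shot coloring algorithm equals χ(N_1(N, Δ)). -/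
/-! Two adjacent views `(x, Γ)` and `(y, Γ')` of `N_1(N, Δ)` are realized at the adjacent centres
`x`, `y` of the union of the stars `x – Γ` and `y – Γ'`; every other vertex `w` has at most the
neighbours `x` (if `w ∈ Γ`) and `y` (if `w ∈ Γ'`), and `swap x w` injects them into `Γ`, so this
graph has maximum degree `max |Γ| |Γ'| ≤ Δ`. Hence a valid algorithm separates adjacent views.
Conversely, the views of adjacent nodes of any graph of maximum degree `Δ` with injective IDs are
adjacent in `N_1(N, Δ)`. -/

/-- The neighborhood graph `N_1(N, Δ)`: vertices are one-hop views `(x, Γ)`,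
with an edge between `(x, Γ)` and `(y, Γ')` iff `x ≠ y`, `x ∈ Γ' \ Γ`,
`y ∈ Γ \ Γ'`, and both views have at most `Δ` neighbors. -/
def neighborhoodGraph (N Δ : ℕ) : SimpleGraph (Fin N × Finset (Fin N)) where
  Adj u v := u.1 ≠ v.1 ∧ u.1 ∈ v.2 ∧ u.1 ∉ u.2 ∧ v.1 ∈ u.2 ∧ v.1 ∉ v.2 ∧
    u.2.card ≤ Δ ∧ v.2.card ≤ Δ
  symm := by
    constructor
    intro u v h
    exact ⟨h.1.symm, h.2.2.2.1, h.2.2.2.2.1, h.2.1, h.2.2.1,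
      h.2.2.2.2.2.2, h.2.2.2.2.2.1⟩
  loopless := by
    constructor
    intro u h
    exact h.1 rfl

/-- A function `A` from one-hop views to colors is a valid deterministic
one-shot coloring algorithm for graphs of maximum degree `Δ` with IDs in `[N]`
if, for every such graph with injectively assigned IDs, adjacent nodes receive
distinct colors. -/
def IsValidOneShot (N Δ : ℕ) {C : Type} (A : Fin N × Finset (Fin N) → C) :
    Prop :=
  ∀ (V : Type) [Fintype V] [DecidableEq V] (G : SimpleGraph V)
    [DecidableRel G.Adj] (f : V → Fin N), Function.Injective f →
      (∀ v, G.degree v ≤ Δ) → ∀ u v, G.Adj u v →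
        A (f u, (G.neighborFinset u).image f) ≠
          A (f v, (G.neighborFinset v).image f)

namespace SimpleGraph

open scoped Finset

variable {V : Type*}

theorem neighborFinset_eq_of_neighborSet_eq {G : SimpleGraph V} {v : V} {s : Finset V}
    [Fintype (G.neighborSet v)] (h : G.neighborSet v = s) : G.neighborFinset v = s :=
  Finset.coe_inj.1 ((coe_neighborFinset _ _).trans h)

def twoStars (x y : V) (s t : Finset V) : SimpleGraph V :=
  fromRel fun a b => (a = x ∧ b ∈ s) ∨ (a = y ∧ b ∈ t)

variable {x y : V} {s t : Finset V}

theorem twoStars_comm : twoStars x y s t = twoStars y x t s := by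
  ext a b
  simp only [twoStars, fromRel_adj]
  tauto

theorem neighborSet_twoStars_left (hxy : x ≠ y) (hxs : x ∉ s) (hys : y ∈ s) :
    (twoStars x y s t).neighborSet x = s := by
  ext b
  simp only [mem_neighborSet, twoStars, fromRel_adj, Finset.mem_coe]
  constructor
  · rintro ⟨-, (⟨-, hb⟩ | ⟨hxy', -⟩) | (⟨rfl, hb⟩ | ⟨rfl, -⟩)⟩
    exacts [hb, absurd hxy' hxy, absurd hb hxs, hys]
  · exact fun hb => ⟨fun h => hxs (h ▸ hb), Or.inl (Or.inl ⟨trivial, hb⟩)⟩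

theorem neighborSet_twoStars_right (hxy : x ≠ y) (hyt : y ∉ t) (hxt : x ∈ t) :
    (twoStars x y s t).neighborSet y = t := by
  rw [twoStars_comm]
  exact neighborSet_twoStars_left hxy.symm hyt hxt

theorem swap_mem_of_adj_twoStars [DecidableEq V] {w b : V} (hxy : x ≠ y) (hwx : w ≠ x)
    (hwy : w ≠ y) (hys : y ∈ s) (h : (twoStars x y s t).Adj w b) : Equiv.swap x w b ∈ s := by
  obtain ⟨-, (⟨h, -⟩ | ⟨h, -⟩) | (⟨rfl, hw⟩ | ⟨rfl, -⟩)⟩ := h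
  · exact absurd h hwx
  · exact absurd h hwy
  · simpa using hw
  · rwa [Equiv.swap_apply_of_ne_of_ne hxy.symm hwy.symm]

theorem degree_twoStars_le [Fintype V] [DecidableEq V] [DecidableRel (twoStars x y s t).Adj]
    (hxy : x ≠ y) (hxs : x ∉ s) (hys : y ∈ s) (hyt : y ∉ t) (hxt : x ∈ t) (w : V) :
    (twoStars x y s t).degree w ≤ max #s #t := by
  have card_eq {v : V} {u : Finset V} (h : (twoStars x y s t).neighborSet v = u) :
      (twoStars x y s t).degree v = #u := by
    rw [← card_neighborFinset_eq_degree, neighborFinset_eq_of_neighborSet_eq h]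
  by_cases hwx : w = x
  · rw [hwx, card_eq (neighborSet_twoStars_left hxy hxs hys)]
    exact le_max_left _ _
  by_cases hwy : w = y
  · rw [hwy, card_eq (neighborSet_twoStars_right hxy hyt hxt)]
    exact le_max_right _ _
  refine le_max_of_le_left (Finset.card_le_card_of_injOn (Equiv.swap x w) (fun b hb => ?_)
    (Equiv.injective _).injOn)
  exact swap_mem_of_adj_twoStars hxy hwx hwy hys ((mem_neighborFinset _ _ _).1 hb)

end SimpleGraph

open SimpleGraph

section OneHopView

variable {V W : Type*} [Fintype V] [DecidableEq W] (G : SimpleGraph V) [DecidableRel G.Adj]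

def oneHopView (f : V → W) (v : V) : W × Finset W :=
  (f v, (G.neighborFinset v).image f)

theorem oneHopView_id_of_neighborSet_eq [DecidableEq V] {v : V} {s : Finset V}
    (h : G.neighborSet v = s) : oneHopView G id v = (v, s) := by
  rw [oneHopView, Finset.image_id, neighborFinset_eq_of_neighborSet_eq h, id]

variable {G} {N Δ : ℕ} {f : V → Fin N}

theorem neighborhoodGraph_adj_oneHopView (hf : Function.Injective f) {u v : V}
    (hu : G.degree u ≤ Δ) (hv : G.degree v ≤ Δ) (h : G.Adj u v) :
    (neighborhoodGraph N Δ).Adj (oneHopView G f u) (oneHopView G f v) := by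
  have not_mem_self (w : V) : f w ∉ (G.neighborFinset w).image f := by
    rw [hf.mem_finset_image, mem_neighborFinset]
    exact G.irrefl
  refine ⟨hf.ne h.ne, ?_, not_mem_self u, ?_, not_mem_self v, ?_, ?_⟩
  · exact hf.mem_finset_image.2 ((mem_neighborFinset _ _ _).2 h.symm)
  · exact hf.mem_finset_image.2 ((mem_neighborFinset _ _ _).2 h)
  · exact (Finset.card_image_of_injective _ hf).trans_le hu
  · exact (Finset.card_image_of_injective _ hf).trans_le hv

end OneHopView

variable {N Δ : ℕ} {C : Type} {A : Fin N × Finset (Fin N) → C}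

theorem IsValidOneShot.map_adj_ne (hA : IsValidOneShot N Δ A) {x y : Fin N}
    {s t : Finset (Fin N)} (h : (neighborhoodGraph N Δ).Adj (x, s) (y, t)) :
    A (x, s) ≠ A (y, t) := by
  obtain ⟨hxy, hxt, hxs, hys, hyt, hs, ht⟩ := h
  classical
  have hdeg (w : Fin N) : (twoStars x y s t).degree w ≤ Δ :=
    (degree_twoStars_le hxy hxs hys hyt hxt w).trans (max_le hs ht)
  have hA' := hA (Fin N) (twoStars x y s t) id Function.injective_id hdeg x y
    ⟨hxy, .inl (.inl ⟨rfl, hys⟩)⟩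
  rwa [← oneHopView, ← oneHopView, oneHopView_id_of_neighborSet_eq _
    (neighborSet_twoStars_left hxy hxs hys), oneHopView_id_of_neighborSet_eq _
    (neighborSet_twoStars_right hxy hyt hxt)] at hA'

theorem isValidOneShot_iff :
    IsValidOneShot N Δ A ↔ ∀ u v, (neighborhoodGraph N Δ).Adj u v → A u ≠ A v :=
  ⟨fun hA _ _ => hA.map_adj_ne, fun hA _ _ _ _ _ _ hf hdeg u v huv =>
    hA _ _ (neighborhoodGraph_adj_oneHopView hf (hdeg u) (hdeg v) huv)⟩

/-- A function from one-hop views to colors is a valid deterministic one-shot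
coloring algorithm iff it is a proper coloring of the neighborhood graph
`N_1(N, Δ)`; in particular, `c` colors suffice for some one-shot coloring
algorithm iff `N_1(N, Δ)` is `c`-colorable, so the minimum number of colors
equals `χ(N_1(N, Δ))`. -/
theorem stmt_19 (N Δ c : ℕ) :
    (∀ (C : Type) (A : Fin N × Finset (Fin N) → C),
      IsValidOneShot N Δ A ↔
        ∀ u v, (neighborhoodGraph N Δ).Adj u v → A u ≠ A v) ∧
    ((∃ A : Fin N × Finset (Fin N) → Fin c, IsValidOneShot N Δ A) ↔
      (neighborhoodGraph N Δ).Colorable c) :=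
  ⟨fun _ _ => isValidOneShot_iff,
    ⟨fun ⟨A, hA⟩ => ⟨Coloring.mk A fun h => hA.map_adj_ne h⟩,
      fun ⟨col⟩ => ⟨col, isValidOneShot_iff.2 fun _ _ h => col.valid h⟩⟩⟩
end
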